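/- arXiv:1910.07693 — 5 statements merged into one kernel-verified Lean document; each statement's English description precedes it below -/
import Mathlib

section
/- Let n1, n2, m, p be positive natural numbers, let Ã ∈ ℝ^{n1×n2}, B̃ ∈ ℝ^{n1×m}, C̃ ∈ ℝ^{p×n2} be real matrices, let M be a subspace of ℝ^{n2} and N a subspace of ℝ^{n1}. Then there exists a matrix K ∈ ℝ^{m×p} such that (Ã + B̃·K·C̃)(M) ⊆ N if and only if Ã(M) ⊆ N + im(B̃) and Ã(M ∩ ker C̃) ⊆ N. -/
noncomputable section

open Matrix Submodule

section GeneralDefs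

variable {X U Y : Type*} [AddCommGroup X] [Module ℝ X] [AddCommGroup U] [Module ℝ U]
  [AddCommGroup Y] [Module ℝ Y]

/-- `V` is an `(A,B,C,D)`-output nulling subspace. -/
def IsOutputNulling (A : X →ₗ[ℝ] X) (B : U →ₗ[ℝ] X) (C : X →ₗ[ℝ] Y) (D : U →ₗ[ℝ] Y)
    (V : Submodule ℝ X) : Prop :=
  ∀ v ∈ V, ∃ u : U, A v + B u ∈ V ∧ C v + D u = 0

/-- `S` is an `(A,B,C,D)`-input containing subspace. -/
def IsInputContaining (A : X →ₗ[ℝ] X) (B : U →ₗ[ℝ] X) (C : X →ₗ[ℝ] Y) (D : U →ₗ[ℝ] Y)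
    (S : Submodule ℝ X) : Prop :=
  ∀ x ∈ S, ∀ u : U, C x + D u = 0 → A x + B u ∈ S

/-- `Vstar` is the largest `(A,B,C,D)`-output nulling subspace, i.e. `V*(A,B,C,D)`. -/
def IsMaxOutputNulling (A : X →ₗ[ℝ] X) (B : U →ₗ[ℝ] X) (C : X →ₗ[ℝ] Y) (D : U →ₗ[ℝ] Y)
    (Vstar : Submodule ℝ X) : Prop :=
  IsOutputNulling A B C D Vstar ∧ ∀ V, IsOutputNulling A B C D V → V ≤ Vstar

/-- `Sstar` is the smallest `(A,B,C,D)`-input containing subspace, i.e. `S*(A,B,C,D)`. -/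
def IsMinInputContaining (A : X →ₗ[ℝ] X) (B : U →ₗ[ℝ] X) (C : X →ₗ[ℝ] Y) (D : U →ₗ[ℝ] Y)
    (Sstar : Submodule ℝ X) : Prop :=
  IsInputContaining A B C D Sstar ∧ ∀ S, IsInputContaining A B C D S → Sstar ≤ S

/-- `V` is `(A,B,C,D)`-self bounded, where `Vstar` is the largest output nulling subspace:
`V` is output nulling and `V ⊇ V* ∩ B(ker D)`. -/
def IsSelfBounded (A : X →ₗ[ℝ] X) (B : U →ₗ[ℝ] X) (C : X →ₗ[ℝ] Y) (D : U →ₗ[ℝ] Y)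
    (Vstar V : Submodule ℝ X) : Prop :=
  IsOutputNulling A B C D V ∧ Vstar ⊓ (LinearMap.ker D).map B ≤ V

/-- `S` is `(A,B,C,D)`-self hidden, where `Sstar` is the smallest input containing subspace:
`S` is input containing and `S ⊆ S* + C⁻¹(im D)`. -/
def IsSelfHidden (A : X →ₗ[ℝ] X) (B : U →ₗ[ℝ] X) (C : X →ₗ[ℝ] Y) (D : U →ₗ[ℝ] Y)
    (Sstar S : Submodule ℝ X) : Prop :=
  IsInputContaining A B C D S ∧ S ≤ Sstar ⊔ (LinearMap.range D).comap C

/-- `Vm` is the smallest `(A,B,C,D)`-self bounded subspace. -/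
def IsMinSelfBounded (A : X →ₗ[ℝ] X) (B : U →ₗ[ℝ] X) (C : X →ₗ[ℝ] Y) (D : U →ₗ[ℝ] Y)
    (Vstar Vm : Submodule ℝ X) : Prop :=
  IsSelfBounded A B C D Vstar Vm ∧ ∀ V, IsSelfBounded A B C D Vstar V → Vm ≤ V

/-- `SM` is the largest `(A,B,C,D)`-self hidden subspace. -/
def IsMaxSelfHidden (A : X →ₗ[ℝ] X) (B : U →ₗ[ℝ] X) (C : X →ₗ[ℝ] Y) (D : U →ₗ[ℝ] Y)
    (Sstar SM : Submodule ℝ X) : Prop :=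
  IsSelfHidden A B C D Sstar SM ∧ ∀ S, IsSelfHidden A B C D Sstar S → S ≤ SM

end GeneralDefs

section MatrixDefs

variable {n m q p r s : ℕ}

/-- `⟨M|U⟩` : the smallest `M`-invariant subspace containing `U`. -/
def invHull (M : Matrix (Fin n) (Fin n) ℝ) (U : Submodule ℝ (Fin n → ℝ)) :
    Submodule ℝ (Fin n → ℝ) :=
  sInf {W | U ≤ W ∧ ∀ x ∈ W, M.mulVec x ∈ W}

/-- `⟨U|M⟩` : the largest `M`-invariant subspace contained in `U`. -/
def invCore (M : Matrix (Fin n) (Fin n) ℝ) (U : Submodule ℝ (Fin n → ℝ)) :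
    Submodule ℝ (Fin n → ℝ) :=
  sSup {W | W ≤ U ∧ ∀ x ∈ W, M.mulVec x ∈ W}

open scoped Classical in
/-- `σ(M | J₂/J₁)`: the multiset of complex roots (with multiplicity) of the characteristic
polynomial of the map induced by `M` on the quotient `J₂ ⧸ J₁`, for `M`-invariant `J₁ ≤ J₂`. -/
def quotSpec (M : Matrix (Fin n) (Fin n) ℝ)
    (J₁ J₂ : Submodule ℝ (Fin n → ℝ)) : Multiset ℂ :=
  if h : J₁ ≤ J₂ ∧ (∀ x ∈ J₁, M.mulVec x ∈ J₁) ∧ (∀ x ∈ J₂, M.mulVec x ∈ J₂) then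
    (((Submodule.mapQ (J₁.comap J₂.subtype) (J₁.comap J₂.subtype)
        (M.mulVecLin.restrict (p := J₂) (q := J₂) (fun x hx => h.2.2 x hx))
        (fun x hx => h.2.1 x.1 hx)).charpoly).map (algebraMap ℝ ℂ)).roots
  else 0

/-- `σ(M)`: the multiset of complex roots (with multiplicity) of the characteristic
polynomial of the square matrix `M`. -/
def specMat {ι : Type*} [Fintype ι] [DecidableEq ι] (M : Matrix ι ι ℝ) : Multiset ℂ :=
  ((M.charpoly).map (algebraMap ℝ ℂ)).roots

/-- Condition (α). -/
def CondAlpha (B : Matrix (Fin n) (Fin m) ℝ) (H : Matrix (Fin n) (Fin q) ℝ)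
    (Dz : Matrix (Fin r) (Fin m) ℝ) (Gz : Matrix (Fin r) (Fin q) ℝ)
    (V : Submodule ℝ (Fin n → ℝ)) : Prop :=
  ∀ w : Fin q → ℝ, ∃ u : Fin m → ℝ,
    H.mulVec w + B.mulVec u ∈ V ∧ Gz.mulVec w + Dz.mulVec u = 0

/-- Condition (β). -/
def CondBeta (C : Matrix (Fin p) (Fin n) ℝ) (Gy : Matrix (Fin p) (Fin q) ℝ)
    (E : Matrix (Fin r) (Fin n) ℝ) (Gz : Matrix (Fin r) (Fin q) ℝ)
    (S : Submodule ℝ (Fin n → ℝ)) : Prop :=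
  ∀ x ∈ S, ∀ w : Fin q → ℝ, C.mulVec x + Gy.mulVec w = 0 → E.mulVec x + Gz.mulVec w = 0

/-- `(S,V;K)` is a solution triple of DDPDOF. -/
def IsSolutionTriple (A : Matrix (Fin n) (Fin n) ℝ) (B : Matrix (Fin n) (Fin m) ℝ)
    (H : Matrix (Fin n) (Fin q) ℝ) (C : Matrix (Fin p) (Fin n) ℝ)
    (Dy : Matrix (Fin p) (Fin m) ℝ) (Gy : Matrix (Fin p) (Fin q) ℝ)
    (E : Matrix (Fin r) (Fin n) ℝ) (Dz : Matrix (Fin r) (Fin m) ℝ)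
    (Gz : Matrix (Fin r) (Fin q) ℝ)
    (S V : Submodule ℝ (Fin n → ℝ)) (K : Matrix (Fin m) (Fin p) ℝ) : Prop :=
  IsInputContaining A.mulVecLin H.mulVecLin C.mulVecLin Gy.mulVecLin S ∧
  IsOutputNulling A.mulVecLin B.mulVecLin E.mulVecLin Dz.mulVecLin V ∧
  CondAlpha B H Dz Gz V ∧
  CondBeta C Gy E Gz S ∧
  S ≤ V ∧
  IsUnit (1 + K * Dy) ∧
  ∀ x ∈ S, ∀ w : Fin q → ℝ,
    (A + B * K * C).mulVec x + (H + B * K * Gy).mulVec w ∈ V ∧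
    (E + Dz * K * C).mulVec x + (Gz + Dz * K * Gy).mulVec w = 0

/-- `F` is an `(A,B,E,Dz)`-output nulling friend of `V`. -/
def IsONFriend (A : Matrix (Fin n) (Fin n) ℝ) (B : Matrix (Fin n) (Fin m) ℝ)
    (E : Matrix (Fin r) (Fin n) ℝ) (Dz : Matrix (Fin r) (Fin m) ℝ)
    (V : Submodule ℝ (Fin n → ℝ)) (F : Matrix (Fin m) (Fin n) ℝ) : Prop :=
  (∀ v ∈ V, (A + B * F).mulVec v ∈ V) ∧ ∀ v ∈ V, (E + Dz * F).mulVec v = 0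

/-- `G` is an `(A,H,C,Gy)`-input containing friend of `S`. -/
def IsICFriend (A : Matrix (Fin n) (Fin n) ℝ) (H : Matrix (Fin n) (Fin q) ℝ)
    (C : Matrix (Fin p) (Fin n) ℝ) (Gy : Matrix (Fin p) (Fin q) ℝ)
    (S : Submodule ℝ (Fin n → ℝ)) (G : Matrix (Fin n) (Fin p) ℝ) : Prop :=
  (∀ x ∈ S, (A + G * C).mulVec x ∈ S) ∧ LinearMap.range (H + G * Gy).mulVecLin ≤ S

/-- `σfix(V;F)`. -/
def sigmaFixV (A : Matrix (Fin n) (Fin n) ℝ) (B : Matrix (Fin n) (Fin m) ℝ)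
    (Dz : Matrix (Fin r) (Fin m) ℝ) (V : Submodule ℝ (Fin n → ℝ))
    (F : Matrix (Fin m) (Fin n) ℝ) : Multiset ℂ :=
  quotSpec (A + B * F) (V ⊔ invHull A (LinearMap.range B.mulVecLin)) ⊤ +
  quotSpec (A + B * F)
    (invHull (A + B * F) (V ⊓ (LinearMap.ker Dz.mulVecLin).map B.mulVecLin)) V

/-- `σfix(S;G)`. -/
def sigmaFixS (A : Matrix (Fin n) (Fin n) ℝ) (C : Matrix (Fin p) (Fin n) ℝ)
    (Gy : Matrix (Fin p) (Fin q) ℝ) (S : Submodule ℝ (Fin n → ℝ))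
    (G : Matrix (Fin n) (Fin p) ℝ) : Multiset ℂ :=
  quotSpec (A + G * C) S
    (invCore (A + G * C) (S ⊔ (LinearMap.range Gy.mulVecLin).comap C.mulVecLin)) +
  quotSpec (A + G * C) ⊥ (S ⊓ invCore A (LinearMap.ker C.mulVecLin))

/-- `σfix(S,V;G,F) = σfix(V;F) ⊎ σfix(S;G)`. -/
def sigmaFix (A : Matrix (Fin n) (Fin n) ℝ) (B : Matrix (Fin n) (Fin m) ℝ)
    (C : Matrix (Fin p) (Fin n) ℝ) (Gy : Matrix (Fin p) (Fin q) ℝ)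
    (Dz : Matrix (Fin r) (Fin m) ℝ) (S V : Submodule ℝ (Fin n → ℝ))
    (G : Matrix (Fin n) (Fin p) ℝ) (F : Matrix (Fin m) (Fin n) ℝ) : Multiset ℂ :=
  sigmaFixV A B Dz V F + sigmaFixS A C Gy S G

/-- `W = (I - Dy·Dc)⁻¹`. -/
def clW (Dy : Matrix (Fin p) (Fin m) ℝ) (Dc : Matrix (Fin m) (Fin p) ℝ) :
    Matrix (Fin p) (Fin p) ℝ := (1 - Dy * Dc)⁻¹

/-- The closed-loop matrix `Â`. -/
def clA (A : Matrix (Fin n) (Fin n) ℝ) (B : Matrix (Fin n) (Fin m) ℝ)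
    (C : Matrix (Fin p) (Fin n) ℝ) (Dy : Matrix (Fin p) (Fin m) ℝ)
    (Ac : Matrix (Fin s) (Fin s) ℝ) (Bc : Matrix (Fin s) (Fin p) ℝ)
    (Cc : Matrix (Fin m) (Fin s) ℝ) (Dc : Matrix (Fin m) (Fin p) ℝ) :
    Matrix (Fin n ⊕ Fin s) (Fin n ⊕ Fin s) ℝ :=
  Matrix.fromBlocks (A + B * Dc * clW Dy Dc * C) (B * Cc + B * Dc * clW Dy Dc * Dy * Cc)
    (Bc * clW Dy Dc * C) (Ac + Bc * clW Dy Dc * Dy * Cc)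

/-- The closed-loop matrix `Ĥ`. -/
def clH (B : Matrix (Fin n) (Fin m) ℝ) (H : Matrix (Fin n) (Fin q) ℝ)
    (Dy : Matrix (Fin p) (Fin m) ℝ) (Gy : Matrix (Fin p) (Fin q) ℝ)
    (Bc : Matrix (Fin s) (Fin p) ℝ) (Dc : Matrix (Fin m) (Fin p) ℝ) :
    Matrix (Fin n ⊕ Fin s) (Fin q) ℝ :=
  Matrix.fromRows (H + B * Dc * clW Dy Dc * Gy) (Bc * clW Dy Dc * Gy)

/-- The closed-loop matrix `Ĉ`. -/
def clC (C : Matrix (Fin p) (Fin n) ℝ) (Dy : Matrix (Fin p) (Fin m) ℝ)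
    (E : Matrix (Fin r) (Fin n) ℝ) (Dz : Matrix (Fin r) (Fin m) ℝ)
    (Cc : Matrix (Fin m) (Fin s) ℝ) (Dc : Matrix (Fin m) (Fin p) ℝ) :
    Matrix (Fin r) (Fin n ⊕ Fin s) ℝ :=
  Matrix.fromCols (E + Dz * Dc * clW Dy Dc * C) (Dz * Cc + Dz * Dc * clW Dy Dc * Dy * Cc)

/-- The closed-loop matrix `Ĝ`. -/
def clG (Dy : Matrix (Fin p) (Fin m) ℝ) (Gy : Matrix (Fin p) (Fin q) ℝ)
    (Dz : Matrix (Fin r) (Fin m) ℝ) (Gz : Matrix (Fin r) (Fin q) ℝ)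
    (Dc : Matrix (Fin m) (Fin p) ℝ) : Matrix (Fin r) (Fin q) ℝ :=
  Gz + Dz * Dc * clW Dy Dc * Gy

/-- DDPDOF is solvable. -/
def DDPDOFSolvable (A : Matrix (Fin n) (Fin n) ℝ) (B : Matrix (Fin n) (Fin m) ℝ)
    (H : Matrix (Fin n) (Fin q) ℝ) (C : Matrix (Fin p) (Fin n) ℝ)
    (Dy : Matrix (Fin p) (Fin m) ℝ) (Gy : Matrix (Fin p) (Fin q) ℝ)
    (E : Matrix (Fin r) (Fin n) ℝ) (Dz : Matrix (Fin r) (Fin m) ℝ)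
    (Gz : Matrix (Fin r) (Fin q) ℝ) : Prop :=
  ∃ (s : ℕ) (Ac : Matrix (Fin s) (Fin s) ℝ) (Bc : Matrix (Fin s) (Fin p) ℝ)
    (Cc : Matrix (Fin m) (Fin s) ℝ) (Dc : Matrix (Fin m) (Fin p) ℝ),
    IsUnit (1 - Dy * Dc) ∧ clG Dy Gy Dz Gz Dc = 0 ∧
    ∀ k : ℕ, clC C Dy E Dz Cc Dc * clA A B C Dy Ac Bc Cc Dc ^ k * clH B H Dy Gy Bc Dc = 0

end MatrixDefs

end

/-!
Write `F = A + B K C`. If `F(M) ⊆ N`, then `A x = F x - B (K C x)` gives the first condition,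
and `F = A` on `ker C` the second. Conversely, the two conditions say that the map
`x ↦ -(A x mod N)` on `M` vanishes on `M ∩ ker C` and takes values in the image of `B`
modulo `N`. The first fact lets it factor through `C`, the second lets the factor lift
through `B` (over a field every linear map into a range lifts), and the composite is `K`.
-/

namespace LinearMap

variable {K X Y Z U : Type*} [DivisionRing K] [AddCommGroup X] [Module K X]
  [AddCommGroup Y] [Module K Y] [AddCommGroup Z] [Module K Z] [AddCommGroup U] [Module K U]

theorem exists_comp_eq_of_ker_le (c : X →ₗ[K] Y) (f : X →ₗ[K] Z) (h : ker c ≤ ker f) :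
    ∃ g : Y →ₗ[K] Z, g ∘ₗ c = f := by
  obtain ⟨ℓ, hℓ⟩ := ((ker c).liftQ c le_rfl).exists_leftInverse_of_injective
    (Submodule.ker_liftQ_eq_bot _ _ _ le_rfl)
  refine ⟨(ker c).liftQ f h ∘ₗ ℓ, ext fun x => ?_⟩
  have hx : ℓ (c x) = Submodule.Quotient.mk x :=
    DFunLike.congr_fun hℓ (Submodule.Quotient.mk x)
  simp [hx]

theorem exists_comp_comp_eq_of_ker_le_of_range_le (b : U →ₗ[K] Z) (c : X →ₗ[K] Y)
    (f : X →ₗ[K] Z) (hker : ker c ≤ ker f) (hrange : range f ≤ range b) :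
    ∃ k : Y →ₗ[K] U, b ∘ₗ k ∘ₗ c = f := by
  obtain ⟨g, hg⟩ := exists_comp_eq_of_ker_le c
    (f.codRestrict (range b) fun x => hrange ⟨x, rfl⟩) (by simpa [ker_codRestrict] using hker)
  obtain ⟨k, hk⟩ :=
    Module.projective_lifting_property b.rangeRestrict g b.surjective_rangeRestrict
  refine ⟨k, ext fun x => ?_⟩
  have hk' : b (k (c x)) = g (c x) := congr_arg Subtype.val (DFunLike.congr_fun hk (c x))
  have hg' : (g (c x) : Z) = f x := congr_arg Subtype.val (DFunLike.congr_fun hg x)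
  simp [hk', hg']

end LinearMap

namespace Submodule

variable {K V W U Y : Type*} [DivisionRing K] [AddCommGroup V] [Module K V]
  [AddCommGroup W] [Module K W] [AddCommGroup U] [Module K U] [AddCommGroup Y] [Module K Y]

theorem exists_map_add_comp_le_iff (A : V →ₗ[K] W) (B : U →ₗ[K] W) (C : V →ₗ[K] Y)
    (M : Submodule K V) (N : Submodule K W) :
    (∃ k : Y →ₗ[K] U, M.map (A + B ∘ₗ k ∘ₗ C) ≤ N) ↔
      M.map A ≤ N ⊔ LinearMap.range B ∧ (M ⊓ LinearMap.ker C).map A ≤ N := by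
  constructor
  · rintro ⟨k, hk⟩
    constructor
    · rintro _ ⟨x, hx, rfl⟩
      have hAx : A x = (A + B ∘ₗ k ∘ₗ C) x + B (-k (C x)) := by simp
      rw [hAx]
      exact add_mem_sup (hk ⟨x, hx, rfl⟩) ⟨_, rfl⟩
    · rintro _ ⟨x, ⟨hxM, hxC⟩, rfl⟩
      have hAx : A x = (A + B ∘ₗ k ∘ₗ C) x := by simp [LinearMap.mem_ker.mp hxC]
      rw [hAx]
      exact hk ⟨x, hxM, rfl⟩
  · rintro ⟨hrange, hker⟩
    set f : M →ₗ[K] W ⧸ N := -(N.mkQ ∘ₗ A ∘ₗ M.subtype) with hf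
    have hf_ker : LinearMap.ker (C ∘ₗ M.subtype) ≤ LinearMap.ker f := by
      rintro ⟨x, hx⟩ hCx
      simpa [hf] using hker ⟨x, ⟨hx, hCx⟩, rfl⟩
    have hf_range : LinearMap.range f ≤ LinearMap.range (N.mkQ ∘ₗ B) := by
      rintro _ ⟨⟨x, hx⟩, rfl⟩
      obtain ⟨n, hn, _, ⟨u, rfl⟩, hsum⟩ := mem_sup.mp (hrange ⟨x, hx, rfl⟩)
      refine ⟨-u, ?_⟩
      simp [hf, ← hsum, (Quotient.mk_eq_zero N).mpr hn]
    obtain ⟨k, hk⟩ := LinearMap.exists_comp_comp_eq_of_ker_le_of_range_le _ _ _ hf_ker hf_range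
    refine ⟨k, ?_⟩
    rintro _ ⟨x, hx, rfl⟩
    rw [← Quotient.mk_eq_zero]
    simpa [hf, eq_neg_iff_add_eq_zero, add_comm] using LinearMap.congr_fun hk ⟨x, hx⟩

end Submodule

theorem stmt0_general {n1 n2 m p : ℕ}
    (At : Matrix (Fin n1) (Fin n2) ℝ) (Bt : Matrix (Fin n1) (Fin m) ℝ)
    (Ct : Matrix (Fin p) (Fin n2) ℝ)
    (M : Submodule ℝ (Fin n2 → ℝ)) (N : Submodule ℝ (Fin n1 → ℝ)) :
    (∃ K : Matrix (Fin m) (Fin p) ℝ, ∀ x ∈ M, (At + Bt * K * Ct).mulVec x ∈ N) ↔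
      M.map At.mulVecLin ≤ N ⊔ LinearMap.range Bt.mulVecLin ∧
        (M ⊓ LinearMap.ker Ct.mulVecLin).map At.mulVecLin ≤ N := by
  rw [← Submodule.exists_map_add_comp_le_iff, ← Matrix.toLin'.symm.exists_congr_right]
  refine exists_congr fun K => ?_
  simp [SetLike.le_def, Matrix.add_mulVec, ← Matrix.mulVec_mulVec]

theorem stmt0 {n1 n2 m p : ℕ} (hn1 : 0 < n1) (hn2 : 0 < n2) (hm : 0 < m) (hp : 0 < p)
    (At : Matrix (Fin n1) (Fin n2) ℝ) (Bt : Matrix (Fin n1) (Fin m) ℝ)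
    (Ct : Matrix (Fin p) (Fin n2) ℝ)
    (M : Submodule ℝ (Fin n2 → ℝ)) (N : Submodule ℝ (Fin n1 → ℝ)) :
    (∃ K : Matrix (Fin m) (Fin p) ℝ, ∀ x ∈ M, (At + Bt * K * Ct).mulVec x ∈ N) ↔
      M.map At.mulVecLin ≤ N ⊔ LinearMap.range Bt.mulVecLin ∧
        (M ⊓ LinearMap.ker Ct.mulVecLin).map At.mulVecLin ≤ N :=
  stmt0_general At Bt Ct M N
end

section
/- Let V be an (A,B,E,D_z)-output nulling subspace and S an (A,H,C,G_y)-input containing subspace. If (a) for every w ∈ ℝ^q there exists u ∈ ℝ^m with Hw + Bu ∈ V and G_z w + D_z u = 0; (b) for every x ∈ S and every w ∈ ℝ^q with Cx + G_y w = 0 one has Ex + G_z w = 0; and (c) S ⊆ V; then there exists a matrix K ∈ ℝ^{m×p} such that for all x ∈ S and w ∈ ℝ^q: (A+BKC)x + (H+BK G_y)w ∈ V and (E+D_z K C)x + (G_z + D_z K G_y)w = 0. Conversely, if such a matrix K exists, then (a) and (b) hold. -/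
/-! Write `y = C x + G_y w` for the measurement and `φ(x, w) = (A x + H w, E x + G_z w)` on
`S × ℝ^q`. Condition (b), input containment of `S` and `S ⊆ V` say that `φ` vanishes modulo
`V × 0` on the kernel of the measurement; output nulling of `V` and (a) say that every value of
`φ` can be cancelled modulo `V × 0` by some `(B u, D_z u)`. Over a field the cancelling input can
be chosen linearly in `(x, w)`, and precomposing it with a generalized inverse of the
measurement makes it a function of `y` alone: that is the output feedback `K`. -/

open Matrix

namespace LinearMap

variable {𝕜 Z P M Q : Type*} [DivisionRing 𝕜] [AddCommGroup Z] [Module 𝕜 Z]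
  [AddCommGroup P] [Module 𝕜 P] [AddCommGroup M] [Module 𝕜 M] [AddCommGroup Q] [Module 𝕜 Q]

theorem exists_comp_comp_eq_self (ψ : Z →ₗ[𝕜] P) : ∃ g : P →ₗ[𝕜] Z, ψ ∘ₗ g ∘ₗ ψ = ψ := by
  obtain ⟨s, hs⟩ := ψ.rangeRestrict.exists_rightInverse_of_surjective ψ.range_rangeRestrict
  obtain ⟨g, hg⟩ := s.exists_extend
  refine ⟨g, ext fun z => ?_⟩
  have hgs : g (ψ z) = s ⟨ψ z, mem_range_self ψ z⟩ := congr($hg ⟨ψ z, mem_range_self ψ z⟩)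
  simpa [hgs] using congr(($hs ⟨ψ z, mem_range_self ψ z⟩ : P))

theorem exists_forall_add_mem (φ₁ : Z →ₗ[𝕜] Q) (φ₂ : M →ₗ[𝕜] Q) (W : Submodule 𝕜 Q)
    (h : ∀ z, ∃ u, φ₁ z + φ₂ u ∈ W) : ∃ U : Z →ₗ[𝕜] M, ∀ z, φ₁ z + φ₂ (U z) ∈ W := by
  have hrange : ∀ z, -W.mkQ (φ₁ z) ∈ range (W.mkQ ∘ₗ φ₂) := fun z => by
    obtain ⟨u, hu⟩ := h z
    refine ⟨u, ?_⟩
    rw [eq_neg_iff_add_eq_zero, add_comm]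
    simpa using (Submodule.Quotient.mk_eq_zero W).2 hu
  obtain ⟨U, hU⟩ := Module.projective_lifting_property (W.mkQ ∘ₗ φ₂).rangeRestrict
    ((-(W.mkQ ∘ₗ φ₁)).codRestrict _ hrange) (surjective_rangeRestrict _)
  refine ⟨U, fun z => ?_⟩
  have hz : W.mkQ (φ₂ (U z)) = -W.mkQ (φ₁ z) := congr(($hU z : Q ⧸ W))
  rw [← Submodule.Quotient.mk_eq_zero]
  simpa [eq_neg_iff_add_eq_zero, add_comm] using hz

theorem exists_forall_add_comp_mem (ψ : Z →ₗ[𝕜] P) (φ₁ : Z →ₗ[𝕜] Q) (φ₂ : M →ₗ[𝕜] Q)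
    (W : Submodule 𝕜 Q) (hker : ∀ z, ψ z = 0 → φ₁ z ∈ W) (h : ∀ z, ∃ u, φ₁ z + φ₂ u ∈ W) :
    ∃ K : P →ₗ[𝕜] M, ∀ z, φ₁ z + φ₂ (K (ψ z)) ∈ W := by
  obtain ⟨g, hg⟩ := ψ.exists_comp_comp_eq_self
  obtain ⟨U, hU⟩ := exists_forall_add_mem φ₁ φ₂ W h
  refine ⟨U ∘ₗ g, fun z => ?_⟩
  have hz : ψ (z - g (ψ z)) = 0 := by
    rw [map_sub, sub_eq_zero]
    exact congr($hg z).symm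
  convert W.add_mem (hker _ hz) (hU (g (ψ z))) using 1
  simp only [comp_apply, map_sub]
  abel

end LinearMap

theorem Matrix.add_mul_mul_mulVec_add {R ι κ μ ν ρ : Type*} [CommRing R] [Fintype ι] [Fintype κ]
    [Fintype μ] [Fintype ν] (A : Matrix ρ ι R) (H : Matrix ρ κ R) (B : Matrix ρ μ R)
    (K : Matrix μ ν R) (C : Matrix ν ι R) (G : Matrix ν κ R) (x : ι → R) (w : κ → R) :
    (A + B * K * C) *ᵥ x + (H + B * K * G) *ᵥ w =
      A *ᵥ x + H *ᵥ w + B *ᵥ (K *ᵥ (C *ᵥ x + G *ᵥ w)) := by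
  simp only [add_mulVec, mulVec_add, ← mulVec_mulVec]
  abel

section DisturbanceDecoupling

variable {n m q p r : ℕ} (A : Matrix (Fin n) (Fin n) ℝ) (B : Matrix (Fin n) (Fin m) ℝ)
  (H : Matrix (Fin n) (Fin q) ℝ) (C : Matrix (Fin p) (Fin n) ℝ) (Gy : Matrix (Fin p) (Fin q) ℝ)
  (E : Matrix (Fin r) (Fin n) ℝ) (Dz : Matrix (Fin r) (Fin m) ℝ) (Gz : Matrix (Fin r) (Fin q) ℝ)
  (V S : Submodule ℝ (Fin n → ℝ))

def IsDecouplingFeedback (K : Matrix (Fin m) (Fin p) ℝ) : Prop :=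
  ∀ x ∈ S, ∀ w : Fin q → ℝ,
    (A + B * K * C).mulVec x + (H + B * K * Gy).mulVec w ∈ V ∧
    (E + Dz * K * C).mulVec x + (Gz + Dz * K * Gy).mulVec w = 0

variable {A B H C Gy E Dz Gz V S}

theorem exists_isDecouplingFeedback
    (hV : IsOutputNulling A.mulVecLin B.mulVecLin E.mulVecLin Dz.mulVecLin V)
    (hS : IsInputContaining A.mulVecLin H.mulVecLin C.mulVecLin Gy.mulVecLin S)
    (hα : CondAlpha B H Dz Gz V) (hβ : CondBeta C Gy E Gz S) (hSV : S ≤ V) :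
    ∃ K, IsDecouplingFeedback A B H C Gy E Dz Gz V S K := by
  have key := LinearMap.exists_forall_add_comp_mem
    ((C.mulVecLin ∘ₗ S.subtype).coprod Gy.mulVecLin)
    (((A.mulVecLin ∘ₗ S.subtype).coprod H.mulVecLin).prod
      ((E.mulVecLin ∘ₗ S.subtype).coprod Gz.mulVecLin))
    (B.mulVecLin.prod Dz.mulVecLin) (V.prod ⊥) ?ker ?cancel
  case ker =>
    rintro ⟨⟨x, hx⟩, w⟩ hy
    simp only [LinearMap.coprod_apply, LinearMap.comp_apply, Submodule.subtype_apply,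
      mulVecLin_apply] at hy
    exact ⟨hSV (hS x hx w hy), hβ x hx w hy⟩
  case cancel =>
    rintro ⟨⟨x, hx⟩, w⟩
    obtain ⟨u₁, hu₁V, hu₁E⟩ := hV x (hSV hx)
    obtain ⟨u₂, hu₂V, hu₂G⟩ := hα w
    refine ⟨u₁ + u₂, ?_, ?_⟩
    · simpa [mulVec_add, add_add_add_comm] using V.add_mem hu₁V hu₂V
    · simp only [mulVecLin_apply] at hu₁E
      simp [mulVec_add, add_add_add_comm, hu₁E, hu₂G]
  obtain ⟨K, hK⟩ := key
  refine ⟨LinearMap.toMatrix' K, fun x hx w => ?_⟩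
  simpa [Matrix.add_mul_mul_mulVec_add] using hK (⟨x, hx⟩, w)

theorem CondAlpha.of_isDecouplingFeedback {K : Matrix (Fin m) (Fin p) ℝ}
    (hK : IsDecouplingFeedback A B H C Gy E Dz Gz V S K) : CondAlpha B H Dz Gz V := fun w => by
  have h := hK 0 S.zero_mem w
  rw [add_mul_mul_mulVec_add, add_mul_mul_mulVec_add] at h
  exact ⟨K *ᵥ (Gy *ᵥ w), by simpa only [mulVec_zero, zero_add] using h⟩

theorem CondBeta.of_isDecouplingFeedback {K : Matrix (Fin m) (Fin p) ℝ}
    (hK : IsDecouplingFeedback A B H C Gy E Dz Gz V S K) : CondBeta C Gy E Gz S :=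
  fun x hx w hy => by
    simpa only [add_mul_mul_mulVec_add, hy, mulVec_zero, add_zero] using (hK x hx w).2

end DisturbanceDecoupling

theorem stmt1 {n m q p r : ℕ}
    (A : Matrix (Fin n) (Fin n) ℝ) (B : Matrix (Fin n) (Fin m) ℝ)
    (H : Matrix (Fin n) (Fin q) ℝ) (C : Matrix (Fin p) (Fin n) ℝ)
    (Gy : Matrix (Fin p) (Fin q) ℝ)
    (E : Matrix (Fin r) (Fin n) ℝ) (Dz : Matrix (Fin r) (Fin m) ℝ)
    (Gz : Matrix (Fin r) (Fin q) ℝ)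
    (V S : Submodule ℝ (Fin n → ℝ))
    (hV : IsOutputNulling A.mulVecLin B.mulVecLin E.mulVecLin Dz.mulVecLin V)
    (hS : IsInputContaining A.mulVecLin H.mulVecLin C.mulVecLin Gy.mulVecLin S) :
    ((CondAlpha B H Dz Gz V ∧ CondBeta C Gy E Gz S ∧ S ≤ V) →
      ∃ K : Matrix (Fin m) (Fin p) ℝ, ∀ x ∈ S, ∀ w : Fin q → ℝ,
        (A + B * K * C).mulVec x + (H + B * K * Gy).mulVec w ∈ V ∧
        (E + Dz * K * C).mulVec x + (Gz + Dz * K * Gy).mulVec w = 0) ∧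
    ((∃ K : Matrix (Fin m) (Fin p) ℝ, ∀ x ∈ S, ∀ w : Fin q → ℝ,
        (A + B * K * C).mulVec x + (H + B * K * Gy).mulVec w ∈ V ∧
        (E + Dz * K * C).mulVec x + (Gz + Dz * K * Gy).mulVec w = 0) →
      CondAlpha B H Dz Gz V ∧ CondBeta C Gy E Gz S) :=
  ⟨fun ⟨hα, hβ, hSV⟩ => exists_isDecouplingFeedback hV hS hα hβ hSV,
    fun ⟨_, hK⟩ => ⟨.of_isDecouplingFeedback hK, .of_isDecouplingFeedback hK⟩⟩
end

section
/- DDPDOF is solvable if and only if there exist an (A,B,E,D_z)-output nulling subspace V, an (A,H,C,G_y)-input containing subspace S and a matrix K ∈ ℝ^{m×p} such that (S,V;K) is a solution triple, i.e.: (i) for every w ∈ ℝ^q there exists u ∈ ℝ^m with Hw + Bu ∈ V and G_z w + D_z u = 0; (ii) for every x ∈ S and w ∈ ℝ^q with Cx + G_y w = 0 one has Ex + G_z w = 0; (iii) S ⊆ V; (iv) I + K·D_y is invertible and for all x ∈ S, w ∈ ℝ^q: (A+BKC)x + (H+BK G_y)w ∈ V and (E+D_z K C)x + (G_z + D_z K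 G_y)w = 0. -/
/-!
Both directions pass through one reformulation of decoupling for the closed loop `(Â, Ĥ, Ĉ, Ĝ)`:
`Ĝ = 0` and `Ĉ Â ^ k Ĥ = 0` for all `k` iff some subspace `𝒲` of the closed-loop state space
satisfies `Â 𝒲 + im Ĥ ⊆ 𝒲` and `Ĉ 𝒲 + im Ĝ = 0` (the unobservable subspace of `(Ĉ, Â)` is one).

Given such a `𝒲`, its projection to the plant coordinates is output nulling, the plant states `x`
with `(x, 0) ∈ 𝒲` form an input-containing subspace inside it, and the static part
`K = D_c (I - D_y D_c)⁻¹` of the controller completes the solution triple.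

Conversely, from a solution triple `(S, V; K)` take a friend `F` of `V` and an output-injection
friend `G` of `S`. The observer-based controller whose state `x₂` estimates the plant state `x₁`
and which applies `u = F x₂ + K (C (x₁ - x₂) + G_y w)` keeps the estimation error `x₁ - x₂` in
`S` (it evolves under `A + G C` with disturbance gain `H + G G_y`) and the plant state in `V`,
so `𝒲 = {(x₁, x₂) | x₁ ∈ V, x₁ - x₂ ∈ S}` works.
-/

open Matrix

section LinearAlgebra

variable {K M Y Z : Type*} [DivisionRing K] [AddCommGroup M] [Module K M] [AddCommGroup Y]
  [Module K Y] [AddCommGroup Z] [Module K Z]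

theorem LinearMap.exists_comp_eq_of_ker_le_s2 {L : M →ₗ[K] Y} {Φ : M →ₗ[K] Z}
    (h : LinearMap.ker L ≤ LinearMap.ker Φ) : ∃ G : Y →ₗ[K] Z, G ∘ₗ L = Φ := by
  obtain ⟨σ, hσ⟩ := L.rangeRestrict.exists_rightInverse_of_surjective L.range_rangeRestrict
  obtain ⟨G, hG⟩ := (Φ ∘ₗ σ).exists_extend
  refine ⟨G, LinearMap.ext fun x => ?_⟩
  have hL : L (σ (L.rangeRestrict x)) = L x :=
    congrArg Subtype.val (LinearMap.congr_fun hσ (L.rangeRestrict x))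
  have hker : σ (L.rangeRestrict x) - x ∈ LinearMap.ker Φ :=
    h (by rw [LinearMap.mem_ker, map_sub, hL, sub_self])
  rw [LinearMap.mem_ker, map_sub, sub_eq_zero] at hker
  simpa [← hker] using LinearMap.congr_fun hG (L.rangeRestrict x)

end LinearAlgebra

section Friends

variable {X U Y : Type*} [AddCommGroup X] [Module ℝ X] [AddCommGroup U] [Module ℝ U]
  [AddCommGroup Y] [Module ℝ Y] {A : X →ₗ[ℝ] X} {B : U →ₗ[ℝ] X} {C : X →ₗ[ℝ] Y} {D : U →ₗ[ℝ] Y}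

theorem IsOutputNulling.exists_linearMap {V : Submodule ℝ X} (h : IsOutputNulling A B C D V) :
    ∃ F : X →ₗ[ℝ] U, ∀ v ∈ V, A v + B (F v) ∈ V ∧ C v + D (F v) = 0 := by
  let T : Submodule ℝ (X × U) :=
    V.comap (LinearMap.fst ℝ X U) ⊓ V.comap (A.coprod B) ⊓ LinearMap.ker (C.coprod D)
  let f : T →ₗ[ℝ] V :=
    ((LinearMap.fst ℝ X U) ∘ₗ T.subtype).codRestrict V fun t => t.2.1.1
  have hf : LinearMap.range f = ⊤ := by
    refine LinearMap.range_eq_top.mpr fun ⟨v, hv⟩ => ?_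
    obtain ⟨u, hu⟩ := h v hv
    exact ⟨⟨(v, u), ⟨hv, hu.1⟩, hu.2⟩, rfl⟩
  obtain ⟨g, hg⟩ := f.exists_rightInverse_of_surjective hf
  obtain ⟨F, hF⟩ := ((LinearMap.snd ℝ X U) ∘ₗ T.subtype ∘ₗ g).exists_extend
  refine ⟨F, fun v hv => ?_⟩
  set t : X × U := (g ⟨v, hv⟩ : X × U)
  have hfst : t.1 = v := congrArg Subtype.val (LinearMap.congr_fun hg ⟨v, hv⟩)
  have hsnd : F v = t.2 := LinearMap.congr_fun hF ⟨v, hv⟩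
  have hV : A t.1 + B t.2 ∈ V := (g ⟨v, hv⟩).2.1.2
  have hker : C t.1 + D t.2 = 0 := (g ⟨v, hv⟩).2.2
  rw [hfst] at hV hker
  rw [hsnd]
  exact ⟨hV, hker⟩

theorem IsInputContaining.exists_linearMap {S : Submodule ℝ X} (h : IsInputContaining A B C D S) :
    ∃ G : Y →ₗ[ℝ] X, ∀ x ∈ S, ∀ u, A x + B u + G (C x + D u) ∈ S := by
  -- the defect `A x + B u` modulo `S` depends only on `C x + D u`
  let L : S × U →ₗ[ℝ] Y := (C ∘ₗ S.subtype).coprod D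
  let Φ : S × U →ₗ[ℝ] X ⧸ S := -(S.mkQ ∘ₗ (A ∘ₗ S.subtype).coprod B)
  have hker : LinearMap.ker L ≤ LinearMap.ker Φ := fun ⟨⟨x, hx⟩, u⟩ hxu => by
    simpa [L, Φ, ← Submodule.Quotient.mk_add, Submodule.Quotient.mk_eq_zero] using h x hx u hxu
  obtain ⟨G', hG'⟩ := LinearMap.exists_comp_eq_of_ker_le_s2 hker
  obtain ⟨σ, hσ⟩ := S.mkQ.exists_rightInverse_of_surjective S.range_mkQ
  refine ⟨σ ∘ₗ G', fun x hx u => ?_⟩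
  have hΦ := LinearMap.congr_fun hG' (⟨x, hx⟩, u)
  have hmk := LinearMap.congr_fun hσ (G' (C x + D u))
  simp only [LinearMap.comp_apply, LinearMap.coprod_apply, Submodule.subtype_apply,
    LinearMap.neg_apply, LinearMap.id_apply, L, Φ] at hΦ hmk
  rw [← Submodule.Quotient.mk_eq_zero, LinearMap.comp_apply, Submodule.Quotient.mk_add,
    ← S.mkQ_apply (σ _), hmk, hΦ]
  simp

end Friends

theorem Matrix.exists_submodule_iff_forall_mul_pow_mul_eq_zero {R ι κ ρ : Type*} [CommRing R]
    [Fintype ι] [DecidableEq ι] [Fintype κ] [DecidableEq κ] (A : Matrix ι ι R)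
    (H : Matrix ι κ R) (C : Matrix ρ ι R) (G : Matrix ρ κ R) :
    (∃ W : Submodule R (ι → R), ∀ ξ ∈ W, ∀ w, A *ᵥ ξ + H *ᵥ w ∈ W ∧ C *ᵥ ξ + G *ᵥ w = 0) ↔
      G = 0 ∧ ∀ k : ℕ, C * A ^ k * H = 0 := by
  constructor
  · rintro ⟨W, hW⟩
    have hpow : ∀ k w, (A ^ k * H) *ᵥ w ∈ W := by
      intro k w
      induction k with
      | zero => simpa using (hW 0 W.zero_mem w).1
      | succ k ih => simpa [pow_succ', mul_assoc, ← mulVec_mulVec] using (hW _ ih 0).1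
    refine ⟨ext_of_mulVec_single fun i => ?_, fun k => ext_of_mulVec_single fun i => ?_⟩
    · simpa only [mulVec_zero, zero_add, zero_mulVec] using (hW 0 W.zero_mem (Pi.single i 1)).2
    · simpa only [mulVec_zero, add_zero, zero_mulVec, mulVec_mulVec, Matrix.mul_assoc]
        using (hW _ (hpow k (Pi.single i 1)) 0).2
  · rintro ⟨rfl, hk⟩
    refine ⟨⨅ k : ℕ, LinearMap.ker (C * A ^ k).mulVecLin, fun ξ hξ w => ?_⟩
    simp only [Submodule.mem_iInf, LinearMap.mem_ker, mulVecLin_apply] at hξ ⊢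
    refine ⟨fun k => ?_, by simpa using hξ 0⟩
    rw [mulVec_add, mulVec_mulVec, mulVec_mulVec, Matrix.mul_assoc, ← pow_succ, hξ, hk,
      zero_mulVec, add_zero]

theorem staticOutputFeedback_mulVec {ι κ μ ν ω : Type*} [Fintype ι] [Fintype κ] [Fintype μ]
    [Fintype ν] (A : Matrix ω ι ℝ) (B : Matrix ω μ ℝ) (K : Matrix μ ν ℝ) (C : Matrix ν ι ℝ)
    (H : Matrix ω κ ℝ) (Gy : Matrix ν κ ℝ) (x : ι → ℝ) (w : κ → ℝ) :
    (A + B * K * C) *ᵥ x + (H + B * K * Gy) *ᵥ w =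
      A *ᵥ x + H *ᵥ w + B *ᵥ (K *ᵥ (C *ᵥ x + Gy *ᵥ w)) := by
  simp only [add_mulVec, mulVec_add, mulVec_mulVec, Matrix.mul_assoc]
  abel

section DDPDOF

variable {n m q p r s : ℕ} {A : Matrix (Fin n) (Fin n) ℝ} {B : Matrix (Fin n) (Fin m) ℝ}
  {H : Matrix (Fin n) (Fin q) ℝ} {C : Matrix (Fin p) (Fin n) ℝ} {Dy : Matrix (Fin p) (Fin m) ℝ}
  {Gy : Matrix (Fin p) (Fin q) ℝ} {E : Matrix (Fin r) (Fin n) ℝ} {Dz : Matrix (Fin r) (Fin m) ℝ}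
  {Gz : Matrix (Fin r) (Fin q) ℝ} {Ac : Matrix (Fin s) (Fin s) ℝ} {Bc : Matrix (Fin s) (Fin p) ℝ}
  {Cc : Matrix (Fin m) (Fin s) ℝ} {Dc : Matrix (Fin m) (Fin p) ℝ}

theorem IsOutputNulling.exists_isONFriend {V : Submodule ℝ (Fin n → ℝ)}
    (h : IsOutputNulling A.mulVecLin B.mulVecLin E.mulVecLin Dz.mulVecLin V) :
    ∃ F, IsONFriend A B E Dz V F := by
  obtain ⟨F, hF⟩ := h.exists_linearMap
  refine ⟨LinearMap.toMatrix' F, fun v hv => ?_, fun v hv => ?_⟩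
  · simpa [add_mulVec, ← mulVec_mulVec] using (hF v hv).1
  · simpa [add_mulVec, ← mulVec_mulVec] using (hF v hv).2

theorem IsInputContaining.exists_isICFriend {S : Submodule ℝ (Fin n → ℝ)}
    (h : IsInputContaining A.mulVecLin H.mulVecLin C.mulVecLin Gy.mulVecLin S) :
    ∃ G, IsICFriend A H C Gy S G := by
  obtain ⟨G, hG⟩ := h.exists_linearMap
  refine ⟨LinearMap.toMatrix' G, fun x hx => ?_, ?_⟩
  · simpa [add_mulVec, ← mulVec_mulVec] using hG x hx 0
  · rintro _ ⟨w, rfl⟩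
    simpa [add_mulVec, ← mulVec_mulVec] using hG 0 S.zero_mem w

section Interconnection

variable {x : Fin n → ℝ} {xc : Fin s → ℝ} {w : Fin q → ℝ} {y : Fin p → ℝ} {u : Fin m → ℝ}

-- `y` and `u` are the measured output and control input of the interconnection
theorem clA_mulVec_add_clH_mulVec
    (hy : y = clW Dy Dc *ᵥ (C *ᵥ x + Dy *ᵥ (Cc *ᵥ xc) + Gy *ᵥ w)) (hu : u = Cc *ᵥ xc + Dc *ᵥ y) :
    clA A B C Dy Ac Bc Cc Dc *ᵥ Sum.elim x xc + clH B H Dy Gy Bc Dc *ᵥ w =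
      Sum.elim (A *ᵥ x + H *ᵥ w + B *ᵥ u) (Ac *ᵥ xc + Bc *ᵥ y) := by
  subst hu hy
  simp only [clA, clH, fromBlocks_mulVec, fromRows_mulVec, Sum.elim_comp_inl, Sum.elim_comp_inr,
    ← Sum.elim_add_add]
  congr 1 <;> simp only [add_mulVec, mulVec_add, mulVec_mulVec, Matrix.mul_assoc] <;> abel

theorem clC_mulVec_add_clG_mulVec
    (hy : y = clW Dy Dc *ᵥ (C *ᵥ x + Dy *ᵥ (Cc *ᵥ xc) + Gy *ᵥ w)) (hu : u = Cc *ᵥ xc + Dc *ᵥ y) :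
    clC C Dy E Dz Cc Dc *ᵥ Sum.elim x xc + clG Dy Gy Dz Gz Dc *ᵥ w =
      E *ᵥ x + Gz *ᵥ w + Dz *ᵥ u := by
  subst hu hy
  simp only [clC, clG, fromCols_mulVec_sumElim, add_mulVec, mulVec_add, mulVec_mulVec,
    Matrix.mul_assoc]
  abel

theorem eq_clW_mulVec_of_loop (hU : IsUnit (1 - Dy * Dc))
    (hy : y = C *ᵥ x + Dy *ᵥ u + Gy *ᵥ w) (hu : u = Cc *ᵥ xc + Dc *ᵥ y) :
    y = clW Dy Dc *ᵥ (C *ᵥ x + Dy *ᵥ (Cc *ᵥ xc) + Gy *ᵥ w) := by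
  have hloop : (1 - Dy * Dc) *ᵥ y = C *ᵥ x + Dy *ᵥ (Cc *ᵥ xc) + Gy *ᵥ w := by
    rw [sub_mulVec, one_mulVec, ← mulVec_mulVec]
    nth_rewrite 1 [hy]
    rw [hu, mulVec_add]
    abel
  rw [← hloop, clW, mulVec_mulVec, nonsing_inv_mul _ ((isUnit_iff_isUnit_det _).mp hU),
    one_mulVec]

end Interconnection

theorem isUnit_one_add_mul_clW_mul (hU : IsUnit (1 - Dy * Dc)) :
    IsUnit (1 + Dc * clW Dy Dc * Dy) := by
  have hdet := (isUnit_iff_isUnit_det _).mp hU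
  have hW : 1 + Dy * (Dc * clW Dy Dc) = clW Dy Dc := by
    have hinv := mul_nonsing_inv _ hdet
    rw [Matrix.sub_mul, Matrix.one_mul, Matrix.mul_assoc, sub_eq_iff_eq_add] at hinv
    exact hinv.symm
  rw [isUnit_iff_isUnit_det, det_one_add_mul_comm, hW]
  exact isUnit_nonsing_inv_det _ hdet

theorem isSolutionTriple_of_closedLoop_invariant (hU : IsUnit (1 - Dy * Dc))
    {W : Submodule ℝ (Fin n ⊕ Fin s → ℝ)}
    (hW : ∀ ξ ∈ W, ∀ w, clA A B C Dy Ac Bc Cc Dc *ᵥ ξ + clH B H Dy Gy Bc Dc *ᵥ w ∈ W ∧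
      clC C Dy E Dz Cc Dc *ᵥ ξ + clG Dy Gy Dz Gz Dc *ᵥ w = 0) :
    IsSolutionTriple A B H C Dy Gy E Dz Gz (W.comap Sum.elimZeroRight)
      (W.map (LinearMap.funLeft ℝ ℝ Sum.inl)) (Dc * clW Dy Dc) := by
  have step : ∀ {x xc w y u}, Sum.elim x xc ∈ W →
      y = clW Dy Dc *ᵥ (C *ᵥ x + Dy *ᵥ (Cc *ᵥ xc) + Gy *ᵥ w) → u = Cc *ᵥ xc + Dc *ᵥ y →
      Sum.elim (A *ᵥ x + H *ᵥ w + B *ᵥ u) (Ac *ᵥ xc + Bc *ᵥ y) ∈ W ∧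
        E *ᵥ x + Gz *ᵥ w + Dz *ᵥ u = 0 := by
    intro x xc w y u hξ hy hu
    rw [← clA_mulVec_add_clH_mulVec hy hu, ← clC_mulVec_add_clG_mulVec hy hu]
    exact hW _ hξ w
  have hV : ∀ {x xc}, Sum.elim x xc ∈ W → x ∈ W.map (LinearMap.funLeft ℝ ℝ Sum.inl) :=
    fun h => ⟨_, h, rfl⟩
  -- a state `Sum.elim x 0` with `C x + Gy w = 0` produces no measurement and no control
  have silent : ∀ {x w}, Sum.elim x (0 : Fin s → ℝ) ∈ W → C *ᵥ x + Gy *ᵥ w = 0 →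
      Sum.elim (A *ᵥ x + H *ᵥ w) 0 ∈ W ∧ E *ᵥ x + Gz *ᵥ w = 0 := by
    intro x w hx hxw
    simpa using step hx (w := w) (y := 0) (u := 0) (by simp [hxw]) (by simp)
  refine ⟨fun x hx w hxw => (silent hx hxw).1, ?_, fun w => ?_,
    fun x hx w hxw => (silent hx hxw).2, fun x hx => hV hx, isUnit_one_add_mul_clW_mul hU,
    fun x hx w => ?_⟩
  · rintro _ ⟨ξ, hξ, rfl⟩
    rw [← Sum.elim_comp_inl_inr ξ] at hξ
    obtain ⟨h1, h2⟩ := step hξ (w := 0) rfl rfl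
    simp only [mulVec_zero, add_zero] at h1 h2
    exact ⟨_, hV h1, h2⟩
  · obtain ⟨h1, h2⟩ := step (x := 0) (xc := 0) (w := w) (by simp) rfl rfl
    simp only [mulVec_zero, zero_add] at h1 h2
    exact ⟨_, hV h1, h2⟩
  · obtain ⟨h1, h2⟩ := step hx (w := w) rfl rfl
    rw [staticOutputFeedback_mulVec, staticOutputFeedback_mulVec]
    exact ⟨by simpa [mulVec_mulVec] using hV h1, by simpa [mulVec_mulVec] using h2⟩

section Observer

variable {K : Matrix (Fin m) (Fin p) ℝ} {F : Matrix (Fin m) (Fin n) ℝ}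
  {G : Matrix (Fin n) (Fin p) ℝ} {x₁ x₂ : Fin n → ℝ} {w : Fin q → ℝ} {y : Fin p → ℝ} {u : Fin m → ℝ}

theorem isUnit_one_sub_mul_inv_mul (hK : IsUnit (1 + K * Dy)) :
    IsUnit (1 - Dy * ((1 + K * Dy)⁻¹ * K)) := by
  have hdet := (isUnit_iff_isUnit_det _).mp hK
  have hN : 1 - (1 + K * Dy)⁻¹ * K * Dy = (1 + K * Dy)⁻¹ := by
    have hinv := nonsing_inv_mul _ hdet
    rw [Matrix.mul_add, Matrix.mul_one, ← Matrix.mul_assoc] at hinv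
    exact (eq_sub_of_add_eq hinv).symm
  rw [isUnit_iff_isUnit_det, det_one_sub_mul_comm, hN]
  exact isUnit_nonsing_inv_det _ hdet

theorem observer_input_eq (hK : IsUnit (1 + K * Dy))
    (hu : u = F *ᵥ x₂ + K *ᵥ (C *ᵥ (x₁ - x₂) + Gy *ᵥ w)) (hy : y = C *ᵥ x₁ + Dy *ᵥ u + Gy *ᵥ w) :
    u = ((1 + K * Dy)⁻¹ * (F - K * C)) *ᵥ x₂ + ((1 + K * Dy)⁻¹ * K) *ᵥ y := by
  have hN := nonsing_inv_mul _ ((isUnit_iff_isUnit_det _).mp hK)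
  calc u = ((1 + K * Dy)⁻¹ * (1 + K * Dy)) *ᵥ u := by rw [hN, one_mulVec]
    _ = _ := by
      rw [← mulVec_mulVec, ← mulVec_mulVec, ← mulVec_mulVec, ← mulVec_add]
      congr 1
      simp only [hy, add_mulVec, sub_mulVec, one_mulVec, mulVec_add, ← mulVec_mulVec]
      nth_rewrite 1 [hu]
      simp only [mulVec_add, mulVec_sub]
      abel

theorem observer_state_eq {Cc : Matrix (Fin m) (Fin n) ℝ} {Dc : Matrix (Fin m) (Fin p) ℝ}
    (hu : u = Cc *ᵥ x₂ + Dc *ᵥ y) (hy : y = C *ᵥ x₁ + Dy *ᵥ u + Gy *ᵥ w) :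
    (A + B * F - (B * K - G) * (C + Dy * Cc)) *ᵥ x₂ + ((B * K - G) * (1 - Dy * Dc)) *ᵥ y =
      (A + B * F) *ᵥ x₂ + (B * K - G) *ᵥ (C *ᵥ (x₁ - x₂) + Gy *ᵥ w) := by
  have hz : (1 - Dy * Dc) *ᵥ y - (C + Dy * Cc) *ᵥ x₂ = C *ᵥ (x₁ - x₂) + Gy *ᵥ w := by
    rw [sub_mulVec, add_mulVec, one_mulVec, ← mulVec_mulVec, ← mulVec_mulVec]
    nth_rewrite 1 [hy]
    rw [hu, mulVec_sub]
    simp only [mulVec_add]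
    abel
  rw [← hz, sub_mulVec _ _ x₂, ← mulVec_mulVec, ← mulVec_mulVec, mulVec_sub]
  abel

end Observer

theorem exists_closedLoop_invariant_of_isSolutionTriple {S V : Submodule ℝ (Fin n → ℝ)}
    {K : Matrix (Fin m) (Fin p) ℝ} (h : IsSolutionTriple A B H C Dy Gy E Dz Gz S V K) :
    ∃ (Ac : Matrix (Fin n) (Fin n) ℝ) (Bc : Matrix (Fin n) (Fin p) ℝ)
      (Cc : Matrix (Fin m) (Fin n) ℝ) (Dc : Matrix (Fin m) (Fin p) ℝ), IsUnit (1 - Dy * Dc) ∧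
      ∃ W : Submodule ℝ (Fin n ⊕ Fin n → ℝ), ∀ ξ ∈ W, ∀ w,
        clA A B C Dy Ac Bc Cc Dc *ᵥ ξ + clH B H Dy Gy Bc Dc *ᵥ w ∈ W ∧
          clC C Dy E Dz Cc Dc *ᵥ ξ + clG Dy Gy Dz Gz Dc *ᵥ w = 0 := by
  obtain ⟨hIC, hON, -, -, hSV, hK, hfb⟩ := h
  obtain ⟨F, hFV, hFE⟩ := hON.exists_isONFriend
  obtain ⟨G, hGS, hGH⟩ := hIC.exists_isICFriend
  set Cc := (1 + K * Dy)⁻¹ * (F - K * C)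
  set Dc := (1 + K * Dy)⁻¹ * K
  have hU : IsUnit (1 - Dy * Dc) := isUnit_one_sub_mul_inv_mul hK
  refine ⟨A + B * F - (B * K - G) * (C + Dy * Cc), (B * K - G) * (1 - Dy * Dc), Cc, Dc, hU,
    V.comap (LinearMap.funLeft ℝ ℝ Sum.inl) ⊓
      S.comap (LinearMap.funLeft ℝ ℝ Sum.inl - LinearMap.funLeft ℝ ℝ Sum.inr), ?_⟩
  rintro ξ ⟨hx₁, he⟩ w
  rw [← Sum.elim_comp_inl_inr ξ]
  set x₁ := ξ ∘ Sum.inl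
  set x₂ := ξ ∘ Sum.inr
  change x₁ ∈ V at hx₁
  change x₁ - x₂ ∈ S at he
  have hx₂ : x₂ ∈ V := by simpa using V.sub_mem hx₁ (hSV he)
  set u := F *ᵥ x₂ + K *ᵥ (C *ᵥ (x₁ - x₂) + Gy *ᵥ w) with hu
  set y := C *ᵥ x₁ + Dy *ᵥ u + Gy *ᵥ w with hy
  have hu' := observer_input_eq hK hu hy
  have hy' := eq_clW_mulVec_of_loop hU hy hu'
  rw [clA_mulVec_add_clH_mulVec hy' hu', clC_mulVec_add_clG_mulVec hy' hu',
    observer_state_eq hu' hy]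
  have hplant : A *ᵥ x₁ + H *ᵥ w + B *ᵥ u =
      (A + B * F) *ᵥ x₂ + ((A + B * K * C) *ᵥ (x₁ - x₂) + (H + B * K * Gy) *ᵥ w) := by
    rw [staticOutputFeedback_mulVec, hu]
    simp only [add_mulVec, mulVec_add, mulVec_sub, ← mulVec_mulVec]
    abel
  have hout : E *ᵥ x₁ + Gz *ᵥ w + Dz *ᵥ u =
      (E + Dz * F) *ᵥ x₂ + ((E + Dz * K * C) *ᵥ (x₁ - x₂) + (Gz + Dz * K * Gy) *ᵥ w) := by
    rw [staticOutputFeedback_mulVec, hu]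
    simp only [add_mulVec, mulVec_add, mulVec_sub, ← mulVec_mulVec]
    abel
  have herr : A *ᵥ x₁ + H *ᵥ w + B *ᵥ u -
      ((A + B * F) *ᵥ x₂ + (B * K - G) *ᵥ (C *ᵥ (x₁ - x₂) + Gy *ᵥ w)) =
      (A + G * C) *ᵥ (x₁ - x₂) + (H + G * Gy) *ᵥ w := by
    rw [hu]
    simp only [add_mulVec, sub_mulVec, mulVec_add, mulVec_sub, ← mulVec_mulVec]
    abel
  refine ⟨⟨?_, ?_⟩, ?_⟩
  · change A *ᵥ x₁ + H *ᵥ w + B *ᵥ u ∈ V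
    rw [hplant]
    exact V.add_mem (hFV _ hx₂) (hfb _ he w).1
  · change A *ᵥ x₁ + H *ᵥ w + B *ᵥ u -
      ((A + B * F) *ᵥ x₂ + (B * K - G) *ᵥ (C *ᵥ (x₁ - x₂) + Gy *ᵥ w)) ∈ S
    rw [herr]
    exact S.add_mem (hGS _ he) (hGH ⟨w, rfl⟩)
  · rw [hout, hFE _ hx₂, (hfb _ he w).2, add_zero]

end DDPDOF

theorem stmt2 {n m q p r : ℕ}
    (A : Matrix (Fin n) (Fin n) ℝ) (B : Matrix (Fin n) (Fin m) ℝ)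
    (H : Matrix (Fin n) (Fin q) ℝ) (C : Matrix (Fin p) (Fin n) ℝ)
    (Dy : Matrix (Fin p) (Fin m) ℝ) (Gy : Matrix (Fin p) (Fin q) ℝ)
    (E : Matrix (Fin r) (Fin n) ℝ) (Dz : Matrix (Fin r) (Fin m) ℝ)
    (Gz : Matrix (Fin r) (Fin q) ℝ) :
    DDPDOFSolvable A B H C Dy Gy E Dz Gz ↔
      ∃ (S V : Submodule ℝ (Fin n → ℝ)) (K : Matrix (Fin m) (Fin p) ℝ),
        IsSolutionTriple A B H C Dy Gy E Dz Gz S V K := by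
  simp only [DDPDOFSolvable, ← exists_submodule_iff_forall_mul_pow_mul_eq_zero]
  constructor
  · rintro ⟨s, Ac, Bc, Cc, Dc, hU, W, hW⟩
    exact ⟨_, _, _, isSolutionTriple_of_closedLoop_invariant hU hW⟩
  · rintro ⟨S, V, K, h⟩
    obtain ⟨Ac, Bc, Cc, Dc, hU, hW⟩ := exists_closedLoop_invariant_of_isSolutionTriple h
    exact ⟨n, Ac, Bc, Cc, Dc, hU, hW⟩
end

section
/- Assume conditions (α) and (β) hold. Let R̂ denote the smallest self bounded subspace of the quadruple (A,[B S_M],E,[D_z 0]) whose input space is ℝ^m × S_M, input map (u,v) ↦ Bu + v and feedthrough (u,v) ↦ D_z u, assumed to exist. Then S*(A,H,C,G_y) ⊆ V*(A,B,E,D_z) if and only if S_M ⊆ R̂. -/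
/-!
Under (β) the disturbance can never excite the output `z` from inside `S*(A,H,C,G_y)`, so
`S*(A,H,C,G_y) = S*(A,H,[C;E],[G_y;G_z]) ⊆ S_M`. Conversely every vector of `S_M` is, modulo
`S*`, a state `t` that the disturbance can reach with `Ct = G_y w`, `Et = G_z w`; condition (α)
then lets the control `u` compensate the disturbance, which shows that `V* + S_M` is output
nulling as soon as `S* ⊆ V*`. Hence `S* ⊆ V*` iff `S_M ⊆ V*`. Finally, feeding `S_M` as an extra
input changes nothing for output nulling subspaces that already contain `S_M`; this turns
`S_M ⊆ V*` into `S_M ⊆ R̂`.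
-/

variable {X U W Y Z : Type*} [AddCommGroup X] [Module ℝ X] [AddCommGroup U] [Module ℝ U]
  [AddCommGroup W] [Module ℝ W] [AddCommGroup Y] [Module ℝ Y] [AddCommGroup Z] [Module ℝ Z]

section ExtraInput

variable {A : X →ₗ[ℝ] X} {B : U →ₗ[ℝ] X} {E : X →ₗ[ℝ] Z} {D : U →ₗ[ℝ] Z}

theorem isOutputNulling_coprod_subtype_iff {S V : Submodule ℝ X} (hSV : S ≤ V) :
    IsOutputNulling A (B.coprod S.subtype) E (D.coprod 0) V ↔ IsOutputNulling A B E D V := by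
  constructor
  · intro hV v hv
    obtain ⟨⟨u, s⟩, hAv, hEv⟩ := hV v hv
    simp only [LinearMap.coprod_apply, Submodule.subtype_apply, LinearMap.zero_apply,
      add_zero] at hAv hEv
    refine ⟨u, ?_, hEv⟩
    simpa [← add_assoc] using sub_mem hAv (hSV s.2)
  · intro hV v hv
    obtain ⟨u, hAv, hEv⟩ := hV v hv
    exact ⟨(u, 0), by simpa using hAv, by simpa using hEv⟩

theorem le_map_coprod_subtype_ker (S : Submodule ℝ X) :
    S ≤ (LinearMap.ker (D.coprod (0 : S →ₗ[ℝ] Z))).map (B.coprod S.subtype) :=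
  fun v hv => ⟨(0, ⟨v, hv⟩), by simp, by simp⟩

theorem le_minSelfBounded_coprod_subtype_iff {S Vstar VstarHat Rhat : Submodule ℝ X}
    (hVstar : IsMaxOutputNulling A B E D Vstar)
    (hVstarHat : IsMaxOutputNulling A (B.coprod S.subtype) E (D.coprod 0) VstarHat)
    (hRhat : IsMinSelfBounded A (B.coprod S.subtype) E (D.coprod 0) VstarHat Rhat) :
    S ≤ Rhat ↔ S ≤ Vstar := by
  constructor
  · intro hSR
    have hR : IsOutputNulling A B E D Rhat :=
      (isOutputNulling_coprod_subtype_iff hSR).1 hRhat.1.1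
    exact hSR.trans (hVstar.2 _ hR)
  · intro hSV
    have hV : Vstar ≤ VstarHat :=
      hVstarHat.2 _ ((isOutputNulling_coprod_subtype_iff hSV).2 hVstar.1)
    exact (le_inf (hSV.trans hV) (le_map_coprod_subtype_ker S)).trans hRhat.1.2

end ExtraInput

section Disturbance

variable {A : X →ₗ[ℝ] X} {H : W →ₗ[ℝ] X} {C : X →ₗ[ℝ] Y} {G : W →ₗ[ℝ] Y}
  {E : X →ₗ[ℝ] Z} {Gz : W →ₗ[ℝ] Z}

theorem IsInputContaining.prod {S : Submodule ℝ X} (hS : IsInputContaining A H C G S) :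
    IsInputContaining A H (C.prod E) (G.prod Gz) S :=
  fun x hx w hw => hS x hx w (congrArg Prod.fst hw)

theorem IsInputContaining.of_prod {S : Submodule ℝ X}
    (hS : IsInputContaining A H (C.prod E) (G.prod Gz) S)
    (hβ : ∀ x ∈ S, ∀ w, C x + G w = 0 → E x + Gz w = 0) :
    IsInputContaining A H C G S :=
  fun x hx w hw => hS x hx w (Prod.ext hw (hβ x hx w hw))

theorem IsMinInputContaining.eq_of_prod {S S₂ : Submodule ℝ X}
    (hS : IsMinInputContaining A H C G S)
    (hS₂ : IsMinInputContaining A H (C.prod E) (G.prod Gz) S₂)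
    (hβ : ∀ x ∈ S, ∀ w, C x + G w = 0 → E x + Gz w = 0) :
    S₂ = S := by
  have hle : S₂ ≤ S := hS₂.2 _ hS.1.prod
  exact le_antisymm hle
    (hS.2 _ (hS₂.1.of_prod fun x hx => hβ x (hle hx)))

theorem IsMinInputContaining.le_of_isMaxSelfHidden {Sstar SM : Submodule ℝ X}
    (hSstar : IsMinInputContaining A H C G Sstar) (hSM : IsMaxSelfHidden A H C G Sstar SM) :
    Sstar ≤ SM :=
  hSM.2 _ ⟨hSstar.1, le_sup_left⟩

variable {B : U →ₗ[ℝ] X} {D : U →ₗ[ℝ] Z}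

theorem exists_control_add_of_mem_inputContaining {V S : Submodule ℝ X}
    (hV : IsOutputNulling A B E D V) (hα : ∀ w, ∃ u, H w + B u ∈ V ∧ Gz w + D u = 0)
    (hS : IsInputContaining A H (C.prod E) (G.prod Gz) S)
    {v t : X} (hv : v ∈ V) (ht : t ∈ S) {w : W} (hw : (G.prod Gz) w = (C.prod E) t) :
    ∃ u, A (v + t) + B u ∈ V ⊔ S ∧ E (v + t) + D u = 0 := by
  obtain ⟨u₁, hAv, hEv⟩ := hV v hv
  obtain ⟨u₂, hHw, hGw⟩ := hα w
  have hAt : A t + H (-w) ∈ S := hS t ht (-w) (by simp [← hw])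
  have hEt : E t = Gz w := (congrArg Prod.snd hw).symm
  refine ⟨u₁ + u₂, ?_, ?_⟩
  · have hsplit : A (v + t) + B (u₁ + u₂) = (A v + B u₁ + (H w + B u₂)) + (A t + H (-w)) := by
      simp only [map_add, map_neg]
      abel
    rw [hsplit]
    exact Submodule.add_mem_sup (add_mem hAv hHw) hAt
  · calc E (v + t) + D (u₁ + u₂) = (E v + D u₁) + (Gz w + D u₂) := by
          rw [map_add, map_add, hEt]; abel
      _ = 0 := by rw [hEv, hGw, add_zero]

theorem isOutputNulling_sup_of_isSelfHidden {V S₀ S : Submodule ℝ X}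
    (hV : IsOutputNulling A B E D V) (hα : ∀ w, ∃ u, H w + B u ∈ V ∧ Gz w + D u = 0)
    (hS : IsSelfHidden A H (C.prod E) (G.prod Gz) S₀ S) (hS₀S : S₀ ≤ S) (hS₀V : S₀ ≤ V) :
    IsOutputNulling A B E D (V ⊔ S) := by
  intro x hx
  obtain ⟨a, ha, s, hs, rfl⟩ := Submodule.mem_sup.1 hx
  obtain ⟨p, hp, t, ht, rfl⟩ := Submodule.mem_sup.1 (hS.2 hs)
  obtain ⟨w, hw⟩ := LinearMap.mem_range.1 (Submodule.mem_comap.1 ht)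
  have htS : t ∈ S := by simpa using sub_mem hs (hS₀S hp)
  simpa only [add_assoc] using
    exists_control_add_of_mem_inputContaining hV hα hS.1 (add_mem ha (hS₀V hp)) htS hw

end Disturbance

theorem stmt4 {n m q p r : ℕ}
    (A : Matrix (Fin n) (Fin n) ℝ) (B : Matrix (Fin n) (Fin m) ℝ)
    (H : Matrix (Fin n) (Fin q) ℝ) (C : Matrix (Fin p) (Fin n) ℝ)
    (Gy : Matrix (Fin p) (Fin q) ℝ)
    (E : Matrix (Fin r) (Fin n) ℝ) (Dz : Matrix (Fin r) (Fin m) ℝ)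
    (Gz : Matrix (Fin r) (Fin q) ℝ)
    (Vstar : Submodule ℝ (Fin n → ℝ))
    (hVstar : IsMaxOutputNulling A.mulVecLin B.mulVecLin E.mulVecLin Dz.mulVecLin Vstar)
    (Sstar : Submodule ℝ (Fin n → ℝ))
    (hSstar : IsMinInputContaining A.mulVecLin H.mulVecLin C.mulVecLin Gy.mulVecLin Sstar)
    (Sstar2 : Submodule ℝ (Fin n → ℝ))
    (hSstar2 : IsMinInputContaining A.mulVecLin H.mulVecLin (C.mulVecLin.prod E.mulVecLin)
      (Gy.mulVecLin.prod Gz.mulVecLin) Sstar2)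
    (SM : Submodule ℝ (Fin n → ℝ))
    (hSM : IsMaxSelfHidden A.mulVecLin H.mulVecLin (C.mulVecLin.prod E.mulVecLin)
      (Gy.mulVecLin.prod Gz.mulVecLin) Sstar2 SM)
    (hα : CondAlpha B H Dz Gz Vstar)
    (hβ : CondBeta C Gy E Gz Sstar)
    (VstarHat : Submodule ℝ (Fin n → ℝ))
    (hVstarHat : IsMaxOutputNulling A.mulVecLin (B.mulVecLin.coprod SM.subtype) E.mulVecLin
      (Dz.mulVecLin.coprod (0 : ↥SM →ₗ[ℝ] (Fin r → ℝ))) VstarHat)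
    (Rhat : Submodule ℝ (Fin n → ℝ))
    (hRhat : IsMinSelfBounded A.mulVecLin (B.mulVecLin.coprod SM.subtype) E.mulVecLin
      (Dz.mulVecLin.coprod (0 : ↥SM →ₗ[ℝ] (Fin r → ℝ))) VstarHat Rhat) :
    Sstar ≤ Vstar ↔ SM ≤ Rhat := by
  rw [← hSstar.eq_of_prod hSstar2 hβ, le_minSelfBounded_coprod_subtype_iff hVstar hVstarHat hRhat]
  have hSM_le : Sstar2 ≤ SM := hSstar2.le_of_isMaxSelfHidden hSM
  refine ⟨fun hSV => ?_, hSM_le.trans⟩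
  exact le_sup_right.trans
    (hVstar.2 _ (isOutputNulling_sup_of_isSelfHidden (H := H.mulVecLin) (Gz := Gz.mulVecLin)
      hVstar.1 hα hSM.1 hSM_le hSV))
end

section
/- Assume conditions (α) and (β) hold. Let π : ℝ^n → ℝ^n/V_m be the canonical projection, and let Q̂ denote the largest self hidden subspace of the quadruple (A,H,[C;π],[G_y;0]) whose output map is x ↦ (Cx, π(x)) and whose feedthrough is w ↦ (G_y w, 0), assumed to exist. Then S*(A,H,C,G_y) ⊆ V*(A,B,E,D_z) if and only if Q̂ ⊆ V_m. -/
/-! Under (α) the disturbance can be rejected inside `V*(A,B,E,D_z)`, so this subspace equals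
`V*(A,[B H],E,[D_z G_z])`, which contains `V_m`. If
`S* ⊆ V*`, then (β) and self-boundedness make `S* ∩ V_m` input containing for the quadruple
with the extra output `π`, hence `Ŝ* ⊆ V_m`, and `Q̂ ⊆ Ŝ* + ker π ⊆ V_m`. Conversely, if
`Q̂ ⊆ V_m` then the output `π` vanishes on `Q̂`, so `Q̂` is `(A,H,C,G_y)`-input containing and
`S* ⊆ Q̂ ⊆ V_m ⊆ V*`. -/

section SubspaceLemmas

variable {X U W Y : Type*} [AddCommGroup X] [Module ℝ X] [AddCommGroup U] [Module ℝ U]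
  [AddCommGroup W] [Module ℝ W] [AddCommGroup Y] [Module ℝ Y]
  {A : X →ₗ[ℝ] X} {B : U →ₗ[ℝ] X} {H : W →ₗ[ℝ] X} {C : X →ₗ[ℝ] Y} {D : U →ₗ[ℝ] Y}
  {G : W →ₗ[ℝ] Y}

theorem IsOutputNulling.coprod {V : Submodule ℝ X} (hV : IsOutputNulling A B C D V) :
    IsOutputNulling A (B.coprod H) C (D.coprod G) V := by
  intro v hv
  obtain ⟨u, hAu, hCu⟩ := hV v hv
  exact ⟨(u, 0), by simpa using hAu, by simpa using hCu⟩

theorem IsOutputNulling.of_coprod {V : Submodule ℝ X}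
    (hV : IsOutputNulling A (B.coprod H) C (D.coprod G) V)
    (hreject : ∀ w, ∃ u, H w + B u ∈ V ∧ G w + D u = 0) :
    IsOutputNulling A B C D V := by
  intro v hv
  obtain ⟨⟨u, w⟩, hAu, hCu⟩ := hV v hv
  obtain ⟨u₁, hHu₁, hGu₁⟩ := hreject w
  refine ⟨u - u₁, ?_, ?_⟩
  · convert V.sub_mem hAu hHu₁ using 1
    simp only [LinearMap.coprod_apply, map_sub]
    abel
  · calc C v + D (u - u₁) = (C v + (D.coprod G) (u, w)) - (G w + D u₁) := by
          simp only [LinearMap.coprod_apply, map_sub]; abel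
      _ = 0 := by rw [hCu, hGu₁, sub_zero]

/-- One step of the dynamics from a self-bounded `V` that stays in `V*` and keeps the output
zero already stays in `V`: it differs from an admissible step inside `V` by an element of
`V* ∩ B(ker D)`. -/
theorem IsSelfBounded.add_mem {Vstar V : Submodule ℝ X} (hV : IsSelfBounded A B C D Vstar V)
    {x : X} (hx : x ∈ V) {u : U} (hCu : C x + D u = 0) (hAu : A x + B u ∈ Vstar)
    (hVVstar : V ≤ Vstar) : A x + B u ∈ V := by
  obtain ⟨u', hAu', hCu'⟩ := hV.1 x hx
  have hker : u - u' ∈ LinearMap.ker D := by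
    calc D (u - u') = (C x + D u) - (C x + D u') := by rw [map_sub]; abel
      _ = 0 := by rw [hCu, hCu', sub_zero]
  have hstep : B (u - u') = (A x + B u) - (A x + B u') := by
    rw [map_sub]; abel
  have hdiff : B (u - u') ∈ V :=
    hV.2 ⟨hstep ▸ Vstar.sub_mem hAu (hVVstar hAu'), ⟨u - u', hker, rfl⟩⟩
  simpa [hstep] using V.add_mem hAu' hdiff

theorem comap_prod_mkQ_range_prod_zero_le (V : Submodule ℝ X) :
    (LinearMap.range (G.prod (0 : W →ₗ[ℝ] X ⧸ V))).comap (C.prod V.mkQ) ≤ V := by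
  rintro x ⟨w, hw⟩
  rw [← Submodule.Quotient.mk_eq_zero]
  exact (congrArg Prod.snd hw).symm

theorem isInputContaining_prod_mkQ_iff_of_le {V S : Submodule ℝ X} (hSV : S ≤ V) :
    IsInputContaining A H (C.prod V.mkQ) (G.prod (0 : W →ₗ[ℝ] X ⧸ V)) S ↔
      IsInputContaining A H C G S := by
  have hout : ∀ x ∈ S, ∀ w, (C.prod V.mkQ) x + (G.prod (0 : W →ₗ[ℝ] X ⧸ V)) w = 0 ↔
      C x + G w = 0 := by
    intro x hx w
    simp [Prod.ext_iff, (Submodule.Quotient.mk_eq_zero V).2 (hSV hx)]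
  exact forall₂_congr fun x hx => forall_congr' fun w => by rw [hout x hx w]

theorem IsSelfHidden.le_of_prod_mkQ {V Sstar S : Submodule ℝ X}
    (hS : IsSelfHidden A H (C.prod V.mkQ) (G.prod (0 : W →ₗ[ℝ] X ⧸ V)) Sstar S)
    (hSstar : Sstar ≤ V) : S ≤ V :=
  hS.2.trans (sup_le hSstar (comap_prod_mkQ_range_prod_zero_le V))

end SubspaceLemmas

theorem stmt5 {n m q p r : ℕ}
    (A : Matrix (Fin n) (Fin n) ℝ) (B : Matrix (Fin n) (Fin m) ℝ)
    (H : Matrix (Fin n) (Fin q) ℝ) (C : Matrix (Fin p) (Fin n) ℝ)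
    (Gy : Matrix (Fin p) (Fin q) ℝ)
    (E : Matrix (Fin r) (Fin n) ℝ) (Dz : Matrix (Fin r) (Fin m) ℝ)
    (Gz : Matrix (Fin r) (Fin q) ℝ)
    (Vstar : Submodule ℝ (Fin n → ℝ))
    (hVstar : IsMaxOutputNulling A.mulVecLin B.mulVecLin E.mulVecLin Dz.mulVecLin Vstar)
    (Sstar : Submodule ℝ (Fin n → ℝ))
    (hSstar : IsMinInputContaining A.mulVecLin H.mulVecLin C.mulVecLin Gy.mulVecLin Sstar)
    (Vstar1 : Submodule ℝ (Fin n → ℝ))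
    (hVstar1 : IsMaxOutputNulling A.mulVecLin (B.mulVecLin.coprod H.mulVecLin) E.mulVecLin
      (Dz.mulVecLin.coprod Gz.mulVecLin) Vstar1)
    (Vm : Submodule ℝ (Fin n → ℝ))
    (hVm : IsMinSelfBounded A.mulVecLin (B.mulVecLin.coprod H.mulVecLin) E.mulVecLin
      (Dz.mulVecLin.coprod Gz.mulVecLin) Vstar1 Vm)
    (hα : CondAlpha B H Dz Gz Vstar)
    (hβ : CondBeta C Gy E Gz Sstar)
    (SstarHat : Submodule ℝ (Fin n → ℝ))
    (hSstarHat : IsMinInputContaining A.mulVecLin H.mulVecLin (C.mulVecLin.prod Vm.mkQ)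
      (Gy.mulVecLin.prod (0 : (Fin q → ℝ) →ₗ[ℝ] ((Fin n → ℝ) ⧸ Vm))) SstarHat)
    (Qhat : Submodule ℝ (Fin n → ℝ))
    (hQhat : IsMaxSelfHidden A.mulVecLin H.mulVecLin (C.mulVecLin.prod Vm.mkQ)
      (Gy.mulVecLin.prod (0 : (Fin q → ℝ) →ₗ[ℝ] ((Fin n → ℝ) ⧸ Vm))) SstarHat Qhat) :
    Sstar ≤ Vstar ↔ Qhat ≤ Vm := by
  have hVstar_le : Vstar ≤ Vstar1 := hVstar1.2 _ hVstar.1.coprod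
  have hVm_le : Vm ≤ Vstar1 := hVstar1.2 _ hVm.1.1
  have hVstar1_le : Vstar1 ≤ Vstar := hVstar.2 _ <| hVstar1.1.of_coprod fun w =>
    (hα w).imp fun _ h => ⟨hVstar_le h.1, h.2⟩
  constructor
  · intro hSV
    have hIC : IsInputContaining A.mulVecLin H.mulVecLin C.mulVecLin Gy.mulVecLin
        (Sstar ⊓ Vm) := by
      intro x hx w hw
      have hAw := hSstar.1 x hx.1 w hw
      refine ⟨hAw, ?_⟩
      simpa using hVm.1.add_mem (u := (0, w)) hx.2 (by simpa using hβ x hx.1 w hw)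
        (by simpa using hVstar_le (hSV hAw)) hVm_le
    exact hQhat.1.le_of_prod_mkQ <|
      (hSstarHat.2 _ ((isInputContaining_prod_mkQ_iff_of_le inf_le_right).2 hIC)).trans
        inf_le_right
  · intro hQ
    exact (hSstar.2 _ ((isInputContaining_prod_mkQ_iff_of_le hQ).1 hQhat.1.1)).trans
      (hQ.trans (hVm_le.trans hVstar1_le))
end
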